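/- If A∧B ≡ C∧D, then one of the following holds: (1) A ≡ C₁∧D₁ and B ≡ C₂∧D₂ with C ≡ C₁∧C₂ and D ≡ D₁∧D₂ for some types C₁,C₂,D₁,D₂; (2) B ≡ C∧D₂ with D ≡ A∧D₂; (3) B ≡ C₂∧D with C ≡ A∧C₂; (4) A ≡ C∧D₁ with D ≡ D₁∧B; (5) A ≡ C₁∧D with C ≡ C₁∧B; (6) A ≡ C and B ≡ D; (7) A ≡ D and B ≡ C. -/
import Mathlib

/-- Types: A ::= τ | A ⇒ A | A ∧ A -/
inductive Ty : Type
  | tau : Ty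
  | imp : Ty → Ty → Ty
  | conj : Ty → Ty → Ty
  deriving DecidableEq

/-- Type equivalence ≡: smallest congruence with the four isomorphisms. -/
inductive TyEq : Ty → Ty → Prop
  | refl (A) : TyEq A A
  | symm {A B} : TyEq A B → TyEq B A
  | trans {A B C} : TyEq A B → TyEq B C → TyEq A C
  | impCongr {A A' B B'} : TyEq A A' → TyEq B B' → TyEq (.imp A B) (.imp A' B')
  | conjCongr {A A' B B'} : TyEq A A' → TyEq B B' → TyEq (.conj A B) (.conj A' B')
  | comm (A B) : TyEq (.conj A B) (.conj B A)
  | assoc (A B C) : TyEq (.conj A (.conj B C)) (.conj (.conj A B) C)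
  | dist (A B C) : TyEq (.imp A (.conj B C)) (.conj (.imp A B) (.imp A C))
  | curry (A B C) : TyEq (.imp (.conj A B) C) (.imp A (.imp B C))

/-- Add premise `a` to a prime factor: τ becomes a⇒τ (convention a∧∅ = a),
    c⇒τ becomes (a∧c)⇒τ. -/
def addPrem (a : Ty) : Ty → Ty
  | .tau => .imp a .tau
  | .imp c .tau => .imp (.conj a c) .tau
  | t => t

/-- Multiset of prime factors. -/
def PF : Ty → Multiset Ty
  | .tau => {.tau}
  | .imp a b => (PF b).map (addPrem a)
  | .conj a b => PF a + PF b

namespace Aux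

open Ty

/-- Prime shape -/
def Prime (p : Ty) : Prop := p = Ty.tau ∨ ∃ c, p = Ty.imp c Ty.tau

theorem PF_prime : ∀ X, ∀ p ∈ PF X, Prime p := by
  intro X
  induction X with
  | tau => intro p hp; simp [PF] at hp; subst hp; exact Or.inl rfl
  | imp a b iha ihb =>
    intro p hp
    simp only [PF, Multiset.mem_map] at hp
    obtain ⟨q, hq, rfl⟩ := hp
    rcases ihb q hq with h | ⟨c, h⟩
    · subst h; exact Or.inr ⟨a, rfl⟩
    · subst h; exact Or.inr ⟨_, rfl⟩
  | conj a b iha ihb =>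
    intro p hp
    simp only [PF, Multiset.mem_add] at hp
    rcases hp with h | h
    · exact iha p h
    · exact ihb p h

theorem PF_ne_zero : ∀ X, PF X ≠ 0 := by
  intro X
  induction X with
  | tau => simp [PF]
  | imp a b iha ihb => simp [PF, Multiset.map_eq_zero]; exact ihb
  | conj a b iha ihb =>
    simp only [PF]
    intro h
    apply iha
    have h2 := congrArg Multiset.card h
    simp only [Multiset.card_add, Multiset.card_zero] at h2
    exact Multiset.card_eq_zero.mp (by omega)

theorem addPrem_tyEq {A A' p p'} (hp : Prime p) (hp' : Prime p')
    (hA : TyEq A A') (h : TyEq p p') : TyEq (addPrem A p) (addPrem A' p') := by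
  rcases hp with rfl | ⟨c, rfl⟩ <;> rcases hp' with rfl | ⟨c', rfl⟩
  · exact TyEq.impCongr hA (TyEq.refl _)
  · -- p = τ, p' = c'⇒τ : A⇒τ ≡ (A'∧c')⇒τ
    show TyEq (imp A tau) (imp (conj A' c') tau)
    refine TyEq.trans (TyEq.impCongr hA h) ?_
    exact TyEq.symm (TyEq.curry A' c' tau)
  · show TyEq (imp (conj A c) tau) (imp A' tau)
    refine TyEq.trans (TyEq.curry A c tau) ?_
    exact TyEq.impCongr hA h
  · show TyEq (imp (conj A c) tau) (imp (conj A' c') tau)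
    refine TyEq.trans (TyEq.curry A c tau) ?_
    refine TyEq.trans (TyEq.impCongr hA h) ?_
    exact TyEq.symm (TyEq.curry A' c' tau)

theorem addPrem_eq_imp {A p} (hp : Prime p) : TyEq (addPrem A p) (imp A p) := by
  rcases hp with rfl | ⟨c, rfl⟩
  · exact TyEq.refl _
  · exact TyEq.curry A c tau

/-- conj of a nonempty list -/
def cl : List Ty → Ty
  | [] => Ty.tau
  | [a] => a
  | a :: b :: l => Ty.conj a (cl (b :: l))

theorem cl_cons {l : List Ty} (h : l ≠ []) (a : Ty) : cl (a :: l) = Ty.conj a (cl l) := by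
  cases l with
  | nil => exact absurd rfl h
  | cons b l => rfl

theorem swap3 (a b X : Ty) : TyEq (conj a (conj b X)) (conj b (conj a X)) := by
  refine TyEq.trans (TyEq.assoc a b X) ?_
  refine TyEq.trans (TyEq.conjCongr (TyEq.comm a b) (TyEq.refl X)) ?_
  exact TyEq.symm (TyEq.assoc b a X)

theorem cl_perm {l₁ l₂ : List Ty} (h : l₁.Perm l₂) : TyEq (cl l₁) (cl l₂) := by
  induction h with
  | nil => exact TyEq.refl _
  | cons a h ih =>
    rename_i l₁' l₂'
    cases l₁' with
    | nil =>
      have hh := h.nil_eq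
      subst hh
      exact TyEq.refl _
    | cons b l =>
      have h2 : l₂' ≠ [] := by
        intro he; subst he; simpa using h.symm.nil_eq
      rw [cl_cons (by simp) a, cl_cons h2 a]
      exact TyEq.conjCongr (TyEq.refl a) ih
  | swap a b l =>
    cases l with
    | nil => exact TyEq.comm b a
    | cons c l =>
      rw [cl_cons (by simp) b, cl_cons (by simp) a, cl_cons (by simp) a, cl_cons (by simp) b]
      exact swap3 b a (cl (c :: l))
  | trans h1 h2 ih1 ih2 => exact TyEq.trans ih1 ih2

theorem cl_append {l₁ l₂ : List Ty} (h1 : l₁ ≠ []) (h2 : l₂ ≠ []) :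
    TyEq (cl (l₁ ++ l₂)) (conj (cl l₁) (cl l₂)) := by
  induction l₁ with
  | nil => exact absurd rfl h1
  | cons a l ih =>
    cases l with
    | nil =>
      rw [List.singleton_append, cl_cons h2 a]
      exact TyEq.refl _
    | cons b l =>
      rw [List.cons_append, cl_cons (by simp [h2]) a, cl_cons (by simp) a]
      refine TyEq.trans (TyEq.conjCongr (TyEq.refl a) (ih (by simp))) ?_
      exact TyEq.assoc a (cl (b :: l)) (cl l₂)

/-- conj of a nonempty multiset -/
noncomputable def CM (s : Multiset Ty) : Ty := cl s.toList

theorem CM_congr {s t : Multiset Ty} (h : s = t) : TyEq (CM s) (CM t) := by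
  subst h; exact TyEq.refl _

theorem CM_singleton (a : Ty) : TyEq (CM {a}) a := by
  have : ({a} : Multiset Ty).toList.Perm [a] := by
    rw [← Multiset.coe_eq_coe, Multiset.coe_toList]; rfl
  exact cl_perm this

theorem toList_ne_nil {s : Multiset Ty} (h : s ≠ 0) : s.toList ≠ [] := by
  simpa [Multiset.toList_eq_nil] using h

theorem CM_add {s t : Multiset Ty} (hs : s ≠ 0) (ht : t ≠ 0) :
    TyEq (CM (s + t)) (conj (CM s) (CM t)) := by
  have hp : (s + t).toList.Perm (s.toList ++ t.toList) := by
    rw [← Multiset.coe_eq_coe, Multiset.coe_toList, ← Multiset.coe_add,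
      Multiset.coe_toList, Multiset.coe_toList]
  refine TyEq.trans (cl_perm hp) ?_
  exact cl_append (toList_ne_nil hs) (toList_ne_nil ht)

theorem CM_cons {a : Ty} {s : Multiset Ty} (hs : s ≠ 0) :
    TyEq (CM (a ::ₘ s)) (conj a (CM s)) := by
  have : (a ::ₘ s) = {a} + s := by simp [Multiset.singleton_add]
  refine TyEq.trans (CM_congr this) ?_
  refine TyEq.trans (CM_add (by simp) hs) ?_
  exact TyEq.conjCongr (CM_singleton a) (TyEq.refl _)

theorem CM_rel {s t : Multiset Ty} (h : Multiset.Rel TyEq s t) (hs : s ≠ 0) :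
    TyEq (CM s) (CM t) := by
  induction h with
  | zero => exact absurd rfl hs
  | @cons a b s t hab hst ih =>
    by_cases h0 : s = 0
    · subst h0
      have ht0 : t = 0 := Multiset.rel_zero_left.mp hst
      subst ht0
      exact TyEq.trans (CM_singleton a) (TyEq.trans hab (TyEq.symm (CM_singleton b)))
    · have ht0 : t ≠ 0 := by
        intro he; subst he; exact h0 (Multiset.rel_zero_right.mp hst)
      refine TyEq.trans (CM_cons h0) ?_
      refine TyEq.trans (TyEq.conjCongr hab (ih h0)) ?_
      exact TyEq.symm (CM_cons ht0)

theorem CM_map_addPrem {A : Ty} {s : Multiset Ty} (hs : s ≠ 0) (hp : ∀ p ∈ s, Prime p) :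
    TyEq (CM (s.map (addPrem A))) (imp A (CM s)) := by
  induction s using Multiset.induction with
  | empty => exact absurd rfl hs
  | cons a s ih =>
    by_cases h0 : s = 0
    · subst h0
      simp only [Multiset.map_cons, Multiset.map_zero]
      refine TyEq.trans (CM_singleton _) ?_
      refine TyEq.trans (addPrem_eq_imp (hp a (by simp))) ?_
      exact TyEq.impCongr (TyEq.refl A) (TyEq.symm (CM_singleton a))
    · rw [Multiset.map_cons]
      have hm0 : s.map (addPrem A) ≠ 0 := by simpa [Multiset.map_eq_zero] using h0
      refine TyEq.trans (CM_cons hm0) ?_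
      have h1 : TyEq (conj (addPrem A a) (CM (s.map (addPrem A))))
          (conj (imp A a) (imp A (CM s))) :=
        TyEq.conjCongr (addPrem_eq_imp (hp a (by simp)))
          (ih h0 (fun p hps => hp p (by simp [hps])))
      refine TyEq.trans h1 ?_
      refine TyEq.trans (TyEq.symm (TyEq.dist A a (CM s))) ?_
      exact TyEq.impCongr (TyEq.refl A) (TyEq.symm (CM_cons h0))

/-- Soundness: every type is equivalent to the conjunction of its prime factors. -/
theorem sound : ∀ X, TyEq X (CM (PF X)) := by
  intro X
  induction X with
  | tau => exact TyEq.symm (CM_singleton tau)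
  | imp a b iha ihb =>
    show TyEq (imp a b) (CM ((PF b).map (addPrem a)))
    refine TyEq.trans (TyEq.impCongr (TyEq.refl a) ihb) ?_
    exact TyEq.symm (CM_map_addPrem (PF_ne_zero b) (PF_prime b))
  | conj a b iha ihb =>
    show TyEq (conj a b) (CM (PF a + PF b))
    refine TyEq.trans (TyEq.conjCongr iha ihb) ?_
    exact TyEq.symm (CM_add (PF_ne_zero a) (PF_ne_zero b))

theorem rel_refl (s : Multiset Ty) : Multiset.Rel TyEq s s := by
  induction s using Multiset.induction with
  | empty => exact Multiset.Rel.zero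
  | cons a s ih => exact Multiset.Rel.cons (TyEq.refl a) ih

theorem rel_of_eq {s t : Multiset Ty} (h : s = t) : Multiset.Rel TyEq s t := by
  subst h; exact rel_refl s

theorem rel_symm {s t : Multiset Ty} (h : Multiset.Rel TyEq s t) : Multiset.Rel TyEq t s := by
  induction h with
  | zero => exact Multiset.Rel.zero
  | cons hab hst ih => exact Multiset.Rel.cons (TyEq.symm hab) ih

theorem rel_trans {s t u : Multiset Ty} (h1 : Multiset.Rel TyEq s t)
    (h2 : Multiset.Rel TyEq t u) : Multiset.Rel TyEq s u := by
  induction h1 generalizing u with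
  | zero =>
    rw [Multiset.rel_zero_left.mp h2]
    exact Multiset.Rel.zero
  | @cons a b s t hab hst ih =>
    obtain ⟨c, u', hbc, hrel, rfl⟩ := Multiset.rel_cons_left.mp h2
    exact Multiset.Rel.cons (TyEq.trans hab hbc) (ih hrel)

theorem rel_map_addPrem {A A' : Ty} (hA : TyEq A A') {s t : Multiset Ty}
    (h : Multiset.Rel TyEq s t) (hs : ∀ p ∈ s, Prime p) (ht : ∀ p ∈ t, Prime p) :
    Multiset.Rel TyEq (s.map (addPrem A)) (t.map (addPrem A')) := by
  induction h with
  | zero => exact Multiset.Rel.zero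
  | @cons a b s t hab hst ih =>
    simp only [Multiset.map_cons]
    refine Multiset.Rel.cons (addPrem_tyEq (hs a (by simp)) (ht b (by simp)) hA hab) ?_
    exact ih (fun p hp => hs p (by simp [hp])) (fun p hp => ht p (by simp [hp]))

theorem rel_map_pointwise {f g : Ty → Ty} {s : Multiset Ty}
    (h : ∀ p ∈ s, TyEq (f p) (g p)) : Multiset.Rel TyEq (s.map f) (s.map g) := by
  induction s using Multiset.induction with
  | empty => exact Multiset.Rel.zero
  | cons a s ih =>
    simp only [Multiset.map_cons]
    exact Multiset.Rel.cons (h a (by simp)) (ih (fun p hp => h p (by simp [hp])))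

/-- Completeness: TyEq implies the prime factor multisets are related. -/
theorem complete {X Y : Ty} (h : TyEq X Y) : Multiset.Rel TyEq (PF X) (PF Y) := by
  induction h with
  | refl A => exact rel_refl _
  | symm h ih => exact rel_symm ih
  | trans h1 h2 ih1 ih2 => exact rel_trans ih1 ih2
  | @impCongr A A' B B' hA hB ihA ihB =>
    exact rel_map_addPrem hA ihB (PF_prime B) (PF_prime B')
  | conjCongr hA hB ihA ihB => exact Multiset.Rel.add ihA ihB
  | comm A B => exact rel_of_eq (add_comm _ _)
  | assoc A B C => exact rel_of_eq (add_assoc _ _ _).symm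
  | dist A B C => exact rel_of_eq (by simp [PF])
  | curry A B C =>
    show Multiset.Rel TyEq ((PF C).map (addPrem (conj A B)))
      (((PF C).map (addPrem B)).map (addPrem A))
    rw [Multiset.map_map]
    refine rel_map_pointwise ?_
    intro p hp
    rcases PF_prime C p hp with rfl | ⟨c, rfl⟩
    · exact TyEq.refl _
    · show TyEq (imp (conj (conj A B) c) tau) (imp (conj A (conj B c)) tau)
      exact TyEq.impCongr (TyEq.symm (TyEq.assoc A B c)) (TyEq.refl _)

/-- Riesz decomposition for multisets. -/
theorem riesz {a b c d : Multiset Ty} (h : a + b = c + d) :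
    ∃ e f g k, a = e + f ∧ b = g + k ∧ c = e + g ∧ d = f + k := by
  refine ⟨a ∩ c, a - a ∩ c, c - a ∩ c, b - (c - a ∩ c), ?_, ?_, ?_, ?_⟩ <;>
    · ext x
      have hc := congrArg (Multiset.count x) h
      simp only [Multiset.count_add] at hc
      simp only [Multiset.count_sub, Multiset.count_inter, Multiset.count_add]
      omega

theorem rel_ne_zero {s t : Multiset Ty} (h : Multiset.Rel TyEq s t) (hs : s ≠ 0) : t ≠ 0 := by
  intro he; subst he; exact hs (Multiset.rel_zero_right.mp h)

end Aux

open Aux in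
/-- Lemma 5 (conj vs conj). -/
theorem conj_conj (A B C D : Ty) (h : TyEq (.conj A B) (.conj C D)) :
    (∃ C₁ C₂ D₁ D₂ : Ty, TyEq A (.conj C₁ D₁) ∧ TyEq B (.conj C₂ D₂) ∧
        TyEq C (.conj C₁ C₂) ∧ TyEq D (.conj D₁ D₂)) ∨
    (∃ D₂ : Ty, TyEq B (.conj C D₂) ∧ TyEq D (.conj A D₂)) ∨
    (∃ C₂ : Ty, TyEq B (.conj C₂ D) ∧ TyEq C (.conj A C₂)) ∨
    (∃ D₁ : Ty, TyEq A (.conj C D₁) ∧ TyEq D (.conj D₁ B)) ∨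
    (∃ C₁ : Ty, TyEq A (.conj C₁ D) ∧ TyEq C (.conj C₁ B)) ∨
    (TyEq A C ∧ TyEq B D) ∨
    (TyEq A D ∧ TyEq B C) := by
  have hrel : Multiset.Rel TyEq (PF A + PF B) (PF C + PF D) := complete h
  obtain ⟨U₁, U₂, hU₁, hU₂, hsum⟩ := Multiset.rel_add_left.mp hrel
  obtain ⟨S11, S12, S21, S22, hu1, hu2, hc, hd⟩ := riesz hsum.symm
  -- TyEq facts
  have hA : TyEq A (CM U₁) := TyEq.trans (sound A) (CM_rel hU₁ (PF_ne_zero A))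
  have hB : TyEq B (CM U₂) := TyEq.trans (sound B) (CM_rel hU₂ (PF_ne_zero B))
  have hU₁0 : U₁ ≠ 0 := rel_ne_zero hU₁ (PF_ne_zero A)
  have hU₂0 : U₂ ≠ 0 := rel_ne_zero hU₂ (PF_ne_zero B)
  have hC : TyEq C (CM (S11 + S21)) := TyEq.trans (sound C) (CM_congr hc)
  have hD : TyEq D (CM (S12 + S22)) := TyEq.trans (sound D) (CM_congr hd)
  by_cases h11 : S11 = 0 <;> by_cases h12 : S12 = 0 <;>
    by_cases h21 : S21 = 0 <;> by_cases h22 : S22 = 0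
  -- enumerate 16 cases
  all_goals (try (subst h11; subst h12; exact absurd (hu1.trans (zero_add 0)) hU₁0))
  all_goals (try (subst h21; subst h22; exact absurd (hu2.trans (zero_add 0)) hU₂0))
  all_goals (try (subst h11; subst h21; exact absurd (hc.trans (zero_add 0)) (PF_ne_zero C)))
  all_goals (try (subst h12; subst h22; exact absurd (hd.trans (zero_add 0)) (PF_ne_zero D)))
  all_goals first
  | -- S11=0, S21≠0, S22=0 : case 7 : A ≡ D, B ≡ C
    (subst h11; subst h22
     refine Or.inr (Or.inr (Or.inr (Or.inr (Or.inr (Or.inr ⟨?_, ?_⟩)))))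
     · -- A ≡ CM U₁ = CM S12 ; D ≡ CM (S12 + 0) = CM S12
       refine TyEq.trans hA (TyEq.symm ?_)
       refine TyEq.trans hD (CM_congr ?_)
       simp [hu1]
     · refine TyEq.trans hB (TyEq.symm ?_)
       refine TyEq.trans hC (CM_congr ?_)
       simp [hu2])
  | -- S12=0, S21=0 : case 6 : A ≡ C, B ≡ D
    (subst h12; subst h21
     refine Or.inr (Or.inr (Or.inr (Or.inr (Or.inr (Or.inl ⟨?_, ?_⟩)))))
     · refine TyEq.trans hA (TyEq.symm ?_)
       refine TyEq.trans hC (CM_congr ?_)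
       simp [hu1]
     · refine TyEq.trans hB (TyEq.symm ?_)
       refine TyEq.trans hD (CM_congr ?_)
       simp [hu2])
  | -- S11=0, S21≠0, S22≠0 : case 2 : B ≡ C ∧ D₂, D ≡ A ∧ D₂
    (subst h11
     refine Or.inr (Or.inl ⟨CM S22, ?_, ?_⟩)
     · -- B ≡ CM U₂ = CM (S21+S22) ≡ CM S21 ∧ CM S22 ; C ≡ CM (0+S21)=CM S21
       refine TyEq.trans hB ?_
       refine TyEq.trans (CM_congr hu2) ?_
       refine TyEq.trans (CM_add h21 h22) ?_
       refine TyEq.conjCongr (TyEq.symm ?_) (TyEq.refl _)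
       refine TyEq.trans hC (CM_congr ?_); simp
     · refine TyEq.trans hD ?_
       refine TyEq.trans (CM_add h12 h22) ?_
       refine TyEq.conjCongr (TyEq.symm ?_) (TyEq.refl _)
       refine TyEq.trans hA (CM_congr ?_); simp [hu1])
  | -- S12=0, S21≠0 (so S22 = PF D ≠ 0 automatically… but here by h22 cases) case 3
    (subst h12
     refine Or.inr (Or.inr (Or.inl ⟨CM S21, ?_, ?_⟩))
     · -- B ≡ CM (S21+S22) ≡ CM S21 ∧ CM S22 ; D ≡ CM(0+S22) = CM S22
       refine TyEq.trans hB ?_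
       refine TyEq.trans (CM_congr hu2) ?_
       refine TyEq.trans (CM_add h21 h22) ?_
       refine TyEq.conjCongr (TyEq.refl _) (TyEq.symm ?_)
       refine TyEq.trans hD (CM_congr ?_); simp
     · refine TyEq.trans hC ?_
       refine TyEq.trans (CM_add h11 h21) ?_
       refine TyEq.conjCongr (TyEq.symm ?_) (TyEq.refl _)
       refine TyEq.trans hA (CM_congr ?_); simp [hu1])
  | -- S21=0, S12≠0 : case 4 : A ≡ C ∧ D₁, D ≡ D₁ ∧ B
    (subst h21
     refine Or.inr (Or.inr (Or.inr (Or.inl ⟨CM S12, ?_, ?_⟩)))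
     · refine TyEq.trans hA ?_
       refine TyEq.trans (CM_congr hu1) ?_
       refine TyEq.trans (CM_add h11 h12) ?_
       refine TyEq.conjCongr (TyEq.symm ?_) (TyEq.refl _)
       refine TyEq.trans hC (CM_congr ?_); simp
     · refine TyEq.trans hD ?_
       refine TyEq.trans (CM_add h12 h22) ?_
       refine TyEq.conjCongr (TyEq.refl _) (TyEq.symm ?_)
       refine TyEq.trans hB (CM_congr ?_); simp [hu2])
  | -- S22=0, S11≠0 : case 5 : A ≡ C₁ ∧ D, C ≡ C₁ ∧ B
    (subst h22
     refine Or.inr (Or.inr (Or.inr (Or.inr (Or.inl ⟨CM S11, ?_, ?_⟩))))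
     · refine TyEq.trans hA ?_
       refine TyEq.trans (CM_congr hu1) ?_
       refine TyEq.trans (CM_add h11 h12) ?_
       refine TyEq.conjCongr (TyEq.refl _) (TyEq.symm ?_)
       refine TyEq.trans hD (CM_congr ?_); simp
     · refine TyEq.trans hC ?_
       refine TyEq.trans (CM_add h11 h21) ?_
       refine TyEq.conjCongr (TyEq.refl _) (TyEq.symm ?_)
       refine TyEq.trans hB (CM_congr ?_); simp [hu2])
  | -- all nonzero : case 1
    (refine Or.inl ⟨CM S11, CM S21, CM S12, CM S22, ?_, ?_, ?_, ?_⟩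
     · refine TyEq.trans hA ?_
       refine TyEq.trans (CM_congr hu1) (CM_add h11 h12)
     · refine TyEq.trans hB ?_
       refine TyEq.trans (CM_congr hu2) (CM_add h21 h22)
     · exact TyEq.trans hC (CM_add h11 h21)
     · exact TyEq.trans hD (CM_add h12 h22))
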